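/- arXiv:1505.02827 — 2 statements merged into one kernel-verified Lean document; each statement's English description precedes it below -/
import Mathlib

section
/- Relative-variance lower bound for the Rhee–Glynn likelihood estimator: let $(D_j^*)_{j\ge1}$ be i.i.d. with mean $\mu = n(\ell - a) \ge 0$ and variance $n^2\sigma^2$, let $N$ be independent geometric with $\mathbb{P}(N \ge k) = (1+\varepsilon)^{-k}$, and define $Y = e^{na}\left[1 + \sum_{k=1}^{N} \frac{1}{\mathbb{P}(N \ge k)}\frac{1}{k!}\prod_{j=1}^k D_j^*\right]$. Then, setting $A = (1+\varepsilon)n^2[\sigma^2 + (\ell - a)^2]$, the relative variance satisfies $\frac{\mathrm{Var}(Y)}{e^{2n\ell}} \ge e^{-2n(\ell - a)}\,\frac{\sinh(2\sqrt{A})}{2\sqrt{A}} - 1$. -/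
lemma four_pow_mul_fact_sq_le (k : ℕ) :
    4 ^ k * (Nat.factorial k) ^ 2 ≤ Nat.factorial (2 * k + 1) := by
  induction k with
  | zero => simp
  | succ k ih =>
    have h1 : 2 * (k + 1) + 1 = (2 * k + 1) + 2 := by ring
    rw [h1]
    have h2 : Nat.factorial ((2 * k + 1) + 2)
        = (2 * k + 3) * ((2 * k + 2) * Nat.factorial (2 * k + 1)) := by
      show Nat.factorial ((2*k+2) + 1) = _
      rw [Nat.factorial_succ, Nat.factorial_succ]
    rw [h2, Nat.factorial_succ]
    calc 4 ^ (k + 1) * ((k + 1) * Nat.factorial k) ^ 2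
        = (4 * (k + 1) ^ 2) * (4 ^ k * (Nat.factorial k) ^ 2) := by ring
      _ ≤ ((2 * k + 3) * (2 * k + 2)) * Nat.factorial (2 * k + 1) := by
          apply Nat.mul_le_mul _ ih
          nlinarith
      _ = (2 * k + 3) * ((2 * k + 2) * Nat.factorial (2 * k + 1)) := by ring

/-- Relative-variance lower bound for the Rhee–Glynn likelihood estimator.
`EY2` is the second moment of `Y`, lower bounded by the series
`∑_k (1+ε)^k e^{2na} (n²σ² + n²(ℓ-a)²)^k / (k!)²`, and `Var Y = EY2 - (e^{nℓ})²`
since `𝔼 Y = e^{nℓ}`. Setting `A = (1+ε) n² (σ² + (ℓ-a)²)`, we get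
`Var(Y)/e^{2nℓ} ≥ e^{-2n(ℓ-a)} sinh(2√A)/(2√A) - 1`. -/
theorem rhee_glynn_relative_variance (n ℓ a σ ε EY2 varY : ℝ)
    (hn : 1 ≤ n) (hla : a ≤ ℓ) (hσ : 0 < σ) (hε : 0 < ε)
    (hY2 : ∑' k : ℕ, (1 + ε) ^ k * Real.exp (2 * n * a) *
        ((n ^ 2 * σ ^ 2 + n ^ 2 * (ℓ - a) ^ 2) ^ k / ((Nat.factorial k : ℝ)) ^ 2)
      ≤ EY2)
    (hvar : varY = EY2 - (Real.exp (n * ℓ)) ^ 2) :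
    varY / Real.exp (2 * n * ℓ)
      ≥ Real.exp (-2 * n * (ℓ - a)) *
          Real.sinh (2 * Real.sqrt ((1 + ε) * n ^ 2 * (σ ^ 2 + (ℓ - a) ^ 2)))
            / (2 * Real.sqrt ((1 + ε) * n ^ 2 * (σ ^ 2 + (ℓ - a) ^ 2))) - 1 := by
  set A : ℝ := (1 + ε) * n ^ 2 * (σ ^ 2 + (ℓ - a) ^ 2) with hAdef
  have hn0 : (0:ℝ) < n := lt_of_lt_of_le one_pos hn
  have hA : 0 < A := by
    apply mul_pos (mul_pos (by linarith) (by positivity))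
    positivity
  set x : ℝ := 2 * Real.sqrt A with hxdef
  have hx : 0 < x := by
    have := Real.sqrt_pos.mpr hA
    positivity
  have hx2 : x ^ 2 = 4 * A := by
    rw [hxdef, mul_pow, Real.sq_sqrt hA.le]; ring
  -- Summability of ∑ A^k / (k!)^2
  have hS : Summable (fun k : ℕ => A ^ k / ((Nat.factorial k : ℝ)) ^ 2) := by
    apply Summable.of_nonneg_of_le (fun k => by positivity)
      (fun k => ?_) (Real.summable_pow_div_factorial A)
    have hf : (1:ℝ) ≤ (Nat.factorial k : ℝ) := by
      exact_mod_cast Nat.one_le_iff_ne_zero.mpr (Nat.factorial_ne_zero k)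
    apply div_le_div_of_nonneg_left (by positivity) (by positivity)
    nlinarith
  -- sinh x / x ≤ ∑ A^k/(k!)^2
  have hsinh : Real.sinh x / x ≤ ∑' k : ℕ, A ^ k / ((Nat.factorial k : ℝ)) ^ 2 := by
    have h1 : HasSum (fun k : ℕ => x ^ (2 * k + 1) / ((Nat.factorial (2 * k + 1) : ℝ)) / x)
        (Real.sinh x / x) := (Real.hasSum_sinh x).div_const x
    refine hasSum_le (fun k => ?_) h1 hS.hasSum
    have hfac : (0:ℝ) < (Nat.factorial (2 * k + 1) : ℝ) := by
      exact_mod_cast Nat.factorial_pos _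
    have hkfac : (0:ℝ) < ((Nat.factorial k : ℝ)) ^ 2 := by positivity
    have heq : x ^ (2 * k + 1) / ((Nat.factorial (2 * k + 1) : ℝ)) / x
        = 4 ^ k * A ^ k / ((Nat.factorial (2 * k + 1) : ℝ)) := by
      rw [pow_succ, pow_mul, hx2, mul_pow]
      field_simp
    rw [heq, div_le_div_iff₀ hfac hkfac]
    have hcast : (4:ℝ) ^ k * ((Nat.factorial k : ℝ)) ^ 2 ≤ (Nat.factorial (2 * k + 1) : ℝ) := by
      exact_mod_cast four_pow_mul_fact_sq_le k
    calc 4 ^ k * A ^ k * ((Nat.factorial k : ℝ)) ^ 2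
        = A ^ k * (4 ^ k * ((Nat.factorial k : ℝ)) ^ 2) := by ring
      _ ≤ A ^ k * (Nat.factorial (2 * k + 1) : ℝ) :=
          mul_le_mul_of_nonneg_left hcast (by positivity)
  -- the series in hY2 equals e^{2na} * ∑ A^k/(k!)^2
  have hEq : (fun k : ℕ => (1 + ε) ^ k * Real.exp (2 * n * a) *
        ((n ^ 2 * σ ^ 2 + n ^ 2 * (ℓ - a) ^ 2) ^ k / ((Nat.factorial k : ℝ)) ^ 2))
      = fun k : ℕ => Real.exp (2 * n * a) * (A ^ k / ((Nat.factorial k : ℝ)) ^ 2) := by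
    funext k
    have hpow : (1 + ε) ^ k * (n ^ 2 * σ ^ 2 + n ^ 2 * (ℓ - a) ^ 2) ^ k = A ^ k := by
      rw [← mul_pow]; congr 1; rw [hAdef]; ring
    rw [← hpow]; ring
  have hEY2 : Real.exp (2 * n * a) * (Real.sinh x / x) ≤ EY2 := by
    calc Real.exp (2 * n * a) * (Real.sinh x / x)
        ≤ Real.exp (2 * n * a) * ∑' k : ℕ, A ^ k / ((Nat.factorial k : ℝ)) ^ 2 :=
          mul_le_mul_of_nonneg_left hsinh (Real.exp_pos _).le
      _ = ∑' k : ℕ, Real.exp (2 * n * a) * (A ^ k / ((Nat.factorial k : ℝ)) ^ 2) :=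
          (tsum_mul_left).symm
      _ ≤ EY2 := by rw [← hEq]; exact hY2
  -- final arithmetic
  have hE2 : (0:ℝ) < Real.exp (2 * n * ℓ) := Real.exp_pos _
  have hsq : (Real.exp (n * ℓ)) ^ 2 = Real.exp (2 * n * ℓ) := by
    rw [sq, ← Real.exp_add]; ring_nf
  rw [ge_iff_le, hvar, hsq, sub_div, div_self hE2.ne']
  apply sub_le_sub_right
  have hLHS : Real.exp (-2 * n * (ℓ - a)) * Real.sinh x / x
      = Real.exp (2 * n * a) * (Real.sinh x / x) / Real.exp (2 * n * ℓ) := by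
    have h3 : -2 * n * (ℓ - a) = 2 * n * a - 2 * n * ℓ := by ring
    rw [h3, Real.exp_sub]
    field_simp
  rw [hLHS]
  exact div_le_div_of_nonneg_right hEY2 hE2.le
end

section
/- Delayed acceptance preserves detailed balance: let $\pi$ be a probability density on a state space $\Theta$, $q(\theta' \mid \theta)$ a proposal density, and suppose the MH acceptance ratio factorizes as $\alpha(\theta,\theta') = \prod_{i=1}^B \rho_i(\theta,\theta')$ where each $\rho_i$ is positive and satisfies $\rho_i(\theta,\theta') = 1/\rho_i(\theta',\theta)$. Then the Markov kernel that proposes $\theta' \sim q(\cdot \mid \theta)$ and accepts with probability $\prod_{i=1}^B \min(\rho_i(\theta,\theta'), 1)$ satisfies detailed balance with respect to $\pi$, provided $\pi(\theta) q(\theta' \mid \theta)\, \alpha(\theta,\theta') = \pi(\theta') q(\theta \mid \theta')$ for all $\theta, \theta'$. -/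
/-- Delayed acceptance preserves detailed balance: if the MH acceptance ratio
factorizes as `α(θ,θ') = ∏ᵢ ρᵢ(θ,θ')` with each `ρᵢ` positive and
`ρᵢ(θ,θ') = 1/ρᵢ(θ',θ)`, and `π(θ) q(θ'|θ) α(θ,θ') = π(θ') q(θ|θ')`, then the
kernel accepting with probability `∏ᵢ min(ρᵢ(θ,θ'), 1)` is in detailed balance
with respect to `π`. -/
theorem delayed_acceptance_detailed_balance {Θ : Type*} (B : ℕ)
    (π : Θ → ℝ) (q : Θ → Θ → ℝ) (ρ : Fin B → Θ → Θ → ℝ)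
    (hpos : ∀ i θ θ', 0 < ρ i θ θ')
    (hskew : ∀ i θ θ', ρ i θ θ' = (ρ i θ' θ)⁻¹)
    (hbal : ∀ θ θ', π θ * q θ θ' * ∏ i, ρ i θ θ' = π θ' * q θ' θ) :
    ∀ θ θ', π θ * q θ θ' * ∏ i, min (ρ i θ θ') 1
      = π θ' * q θ' θ * ∏ i, min (ρ i θ' θ) 1 := by
  intro θ θ'
  have key : ∀ i : Fin B, min (ρ i θ θ') 1 = ρ i θ θ' * min (ρ i θ' θ) 1 := by
    intro i
    rw [mul_min_of_nonneg _ _ (hpos i θ θ').le, mul_one,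
      hskew i θ θ', inv_mul_cancel₀ (hpos i θ' θ).ne', min_comm]
  calc π θ * q θ θ' * ∏ i, min (ρ i θ θ') 1
      = (π θ * q θ θ' * ∏ i, ρ i θ θ') * ∏ i, min (ρ i θ' θ) 1 := by
        simp only [key, Finset.prod_mul_distrib]; ring
    _ = π θ' * q θ' θ * ∏ i, min (ρ i θ' θ) 1 := by rw [hbal]
end
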